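/- Concentration bound for completely monotone kernels: let W ⊂ V be a proper subspace, suppose the marginal density of X on V/W is bounded by p₀, and 𝒦(r) = ∫₀^∞ e^{−tr} dν(t). Then E[𝒦(|X−X'|_Σ²)] ≤ (p₀ / √det(Σ_{V/W})) ∫₀^∞ (π t^{-1})^{d_{W'}/2} dν(t), where Σ_{V/W} is the quotient inner product induced by Σ on V/W and d_{W'} = dim(V/W). -/

import Mathlib

open MeasureTheory ProbabilityTheory Real Matrix
open scoped ENNReal MatrixOrder

/-! Since the quotient form is an infimum, `exp (-t |x|_Σ²) ≤ exp (-t |x'|²_{Σ_{V/W}})`, a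
function of the `V/W`-components only. Conditioning on `X'` and using the density bound, the
expectation of the latter is at most `p₀` times a Gaussian integral, `(π/t)^{m/2} / √det A`;
writing `𝒦` as a Laplace transform and swapping the integrals (Fubini) gives the bound. -/

section LinearChangeOfVariables
variable {E F : Type*} [NormedAddCommGroup E] [NormedSpace ℝ E] [MeasurableSpace E]
  [BorelSpace E] [FiniteDimensional ℝ E] [NormedAddCommGroup F] (μ : Measure E)
  [μ.IsAddHaarMeasure] {T : E →ₗ[ℝ] E}

theorem LinearMap.measurableEmbedding_of_det_ne_zero (hT : LinearMap.det T ≠ 0) :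
    MeasurableEmbedding T :=
  (T.equivOfDetNeZero hT).toContinuousLinearEquiv.toHomeomorph.measurableEmbedding

theorem integral_comp_linearMap [NormedSpace ℝ F] (hT : LinearMap.det T ≠ 0) (f : E → F) :
    ∫ y, f (T y) ∂μ = |(LinearMap.det T)⁻¹| • ∫ x, f x ∂μ := by
  rw [← (T.measurableEmbedding_of_det_ne_zero hT).integral_map,
    Measure.map_linearMap_addHaar_eq_smul_addHaar μ hT, integral_smul_measure,
    ENNReal.toReal_ofReal (abs_nonneg _)]

theorem integrable_comp_linearMap_iff (hT : LinearMap.det T ≠ 0) {f : E → F} :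
    Integrable (fun y => f (T y)) μ ↔ Integrable f μ := by
  rw [← Function.comp_def, ← (T.measurableEmbedding_of_det_ne_zero hT).integrable_map_iff,
    Measure.map_linearMap_addHaar_eq_smul_addHaar μ hT]
  exact integrable_smul_measure (by simpa using hT) ENNReal.ofReal_ne_top

end LinearChangeOfVariables

section GaussianLinear
variable {E : Type*} [NormedAddCommGroup E] [InnerProductSpace ℝ E] [FiniteDimensional ℝ E]
  [MeasurableSpace E] [BorelSpace E] {T : E →ₗ[ℝ] E} {t : ℝ}

theorem integrable_exp_neg_mul_sq_norm (ht : 0 < t) :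
    Integrable (fun v : E => rexp (-t * ‖v‖ ^ 2)) := by
  have := (GaussianFourier.integrable_cexp_neg_mul_sq_norm_add (V := E)
    (show 0 < (t : ℂ).re by simpa using ht) 0 0).re
  simpa [← Complex.ofReal_pow, ← Complex.ofReal_neg, ← Complex.ofReal_mul,
    Complex.exp_ofReal_re] using this

theorem integrable_exp_neg_mul_sq_norm_comp_linearMap (hT : LinearMap.det T ≠ 0) (ht : 0 < t) :
    Integrable (fun v : E => rexp (-t * ‖T v‖ ^ 2)) :=
  (integrable_comp_linearMap_iff volume hT (f := fun v => rexp (-t * ‖v‖ ^ 2))).2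
    (integrable_exp_neg_mul_sq_norm ht)

theorem integral_exp_neg_mul_sq_norm_comp_linearMap (hT : LinearMap.det T ≠ 0) (ht : 0 < t) :
    ∫ v : E, rexp (-t * ‖T v‖ ^ 2) =
      (π / t) ^ (Module.finrank ℝ E / 2 : ℝ) / |LinearMap.det T| := by
  rw [integral_comp_linearMap volume hT (fun v => rexp (-t * ‖v‖ ^ 2)),
    GaussianFourier.integral_rexp_neg_mul_sq_norm ht, smul_eq_mul, abs_inv, inv_mul_eq_div]

end GaussianLinear

namespace Matrix.PosDef

variable {ι : Type*} [Fintype ι] [DecidableEq ι] {A : Matrix ι ι ℝ}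

theorem exists_linearMap_sq_norm_eq (hA : A.PosDef) :
    ∃ T : EuclideanSpace ℝ ι →ₗ[ℝ] EuclideanSpace ℝ ι, |LinearMap.det T| = √A.det ∧
      ∀ y, ‖T y‖ ^ 2 = ∑ i, ∑ j, A i j * y i * y j := by
  set S := CFC.sqrt A
  have hS : Sᴴ = S := (CFC.sqrt_nonneg A).isSelfAdjoint
  refine ⟨toEuclideanLin S, ?_, fun y => ?_⟩
  · rw [toEuclideanLin_eq_toLin_orthonormal, LinearMap.det_toLin, hA.posSemidef.det_sqrt]
    simp
  · rw [← real_inner_self_eq_norm_sq, ← LinearMap.adjoint_inner_left,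
      ← toEuclideanLin_conjTranspose_eq_adjoint, hS, ← LinearMap.comp_apply, ← toLpLin_mul_same,
      CFC.sqrt_mul_sqrt_self A hA.posSemidef.nonneg]
    simp only [PiLp.inner_apply, ofLp_toLpLin, toLin'_apply, mulVec, dotProduct,
      RCLike.inner_apply, map_sum, ringHom_apply]
    simp_rw [Finset.mul_sum]
    exact Finset.sum_congr rfl fun i _ => Finset.sum_congr rfl fun j _ => by ring

theorem integrable_exp_neg_mul_quadForm (hA : A.PosDef) {t : ℝ} (ht : 0 < t) :
    Integrable fun y : EuclideanSpace ℝ ι => rexp (-t * ∑ i, ∑ j, A i j * y i * y j) := by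
  obtain ⟨T, hdet, hT⟩ := hA.exists_linearMap_sq_norm_eq
  simp_rw [← hT]
  exact integrable_exp_neg_mul_sq_norm_comp_linearMap
    (abs_pos.1 (hdet ▸ sqrt_pos.2 hA.det_pos)) ht

theorem integral_exp_neg_mul_quadForm (hA : A.PosDef) {t : ℝ} (ht : 0 < t) :
    ∫ y : EuclideanSpace ℝ ι, rexp (-t * ∑ i, ∑ j, A i j * y i * y j) =
      (π / t) ^ (Fintype.card ι / 2 : ℝ) / √A.det := by
  obtain ⟨T, hdet, hT⟩ := hA.exists_linearMap_sq_norm_eq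
  simp_rw [← hT]
  rw [integral_exp_neg_mul_sq_norm_comp_linearMap (abs_pos.1 (hdet ▸ sqrt_pos.2 hA.det_pos)) ht,
    hdet, finrank_euclideanSpace]

end Matrix.PosDef

section DifferenceOfIndependent
variable {Ω E : Type*} [MeasurableSpace Ω] {μ : Measure Ω} [IsProbabilityMeasure μ]
  [AddGroup E] [MeasurableSpace E] [MeasurableAdd E] [MeasurableSub₂ E]
  {ρ : Measure E} [ρ.IsAddRightInvariant] {Y Y' : Ω → E}

theorem lintegral_comp_sub_le_of_map_le_smul (hY : Measurable Y) (hY' : Measurable Y')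
    (hindep : IndepFun Y Y' μ) {c : ℝ≥0∞} (hle : μ.map Y ≤ c • ρ) {G : E → ℝ≥0∞}
    (hG : Measurable G) :
    ∫⁻ ω, G (Y ω - Y' ω) ∂μ ≤ c * ∫⁻ x, G x ∂ρ := by
  have := Measure.isProbabilityMeasure_map (μ := μ) hY'.aemeasurable
  have hpair : μ.map (fun ω => (Y ω, Y' ω)) = (μ.map Y).prod (μ.map Y') :=
    (indepFun_iff_map_prod_eq_prod_map_map hY.aemeasurable hY'.aemeasurable).mp hindep
  have hGsub : Measurable fun p : E × E => G (p.1 - p.2) :=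
    hG.comp (measurable_fst.sub measurable_snd)
  calc ∫⁻ ω, G (Y ω - Y' ω) ∂μ
      = ∫⁻ p, G (p.1 - p.2) ∂((μ.map Y).prod (μ.map Y')) := by
        rw [← hpair, lintegral_map hGsub (hY.prodMk hY')]
    _ = ∫⁻ y', ∫⁻ y, G (y - y') ∂(μ.map Y) ∂(μ.map Y') := lintegral_prod_symm' _ hGsub
    _ ≤ ∫⁻ _, c * ∫⁻ x, G x ∂ρ ∂(μ.map Y') := by
        gcongr with y'
        calc ∫⁻ y, G (y - y') ∂(μ.map Y)
            ≤ ∫⁻ y, G (y - y') ∂(c • ρ) := lintegral_mono' hle le_rfl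
          _ = c * ∫⁻ x, G x ∂ρ := by
            rw [lintegral_smul_measure, lintegral_sub_right_eq_self, smul_eq_mul]
    _ = c * ∫⁻ x, G x ∂ρ := by simp

theorem integral_comp_sub_le_of_map_le_smul (hY : Measurable Y) (hY' : Measurable Y')
    (hindep : IndepFun Y Y' μ) {c : ℝ} (hc : 0 ≤ c) (hle : μ.map Y ≤ ENNReal.ofReal c • ρ)
    {G : E → ℝ} (hG : Measurable G) (hG0 : 0 ≤ G) (hGint : Integrable G ρ) :
    ∫ ω, G (Y ω - Y' ω) ∂μ ≤ c * ∫ x, G x ∂ρ := by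
  have hGY : AEStronglyMeasurable (fun ω => G (Y ω - Y' ω)) μ :=
    (hG.comp (hY.sub hY')).aestronglyMeasurable
  rw [integral_eq_lintegral_of_nonneg_ae (f := fun ω => G (Y ω - Y' ω))
      (.of_forall fun _ => hG0 _) hGY,
    integral_eq_lintegral_of_nonneg_ae (.of_forall hG0) hG.aestronglyMeasurable,
    ← ENNReal.toReal_ofReal hc, ← ENNReal.toReal_mul]
  exact ENNReal.toReal_mono
    (ENNReal.mul_ne_top ENNReal.ofReal_ne_top hGint.lintegral_lt_top.ne)
    (lintegral_comp_sub_le_of_map_le_smul hY hY' hindep hle hG.ennreal_ofReal)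

end DifferenceOfIndependent

theorem Matrix.PosDef.integral_exp_neg_mul_quadForm_sub_le {Ω ι : Type*} [MeasurableSpace Ω]
    {μ : Measure Ω} [IsProbabilityMeasure μ] [Fintype ι] [DecidableEq ι] {A : Matrix ι ι ℝ}
    (hA : A.PosDef) {Y Y' : Ω → EuclideanSpace ℝ ι} (hY : Measurable Y) (hY' : Measurable Y')
    (hindep : IndepFun Y Y' μ) {p₀ : ℝ} (hp₀ : 0 ≤ p₀)
    (hle : μ.map Y ≤ ENNReal.ofReal p₀ • volume) {t : ℝ} (ht : 0 < t) :
    ∫ ω, rexp (-t * ∑ i, ∑ j, A i j * (Y ω - Y' ω) i * (Y ω - Y' ω) j) ∂μ ≤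
      p₀ / √A.det * (π / t) ^ (Fintype.card ι / 2 : ℝ) := by
  calc _ ≤ p₀ * ∫ y : EuclideanSpace ℝ ι, rexp (-t * ∑ i, ∑ j, A i j * y i * y j) :=
        integral_comp_sub_le_of_map_le_smul hY hY' hindep hp₀ hle (by fun_prop)
          (fun _ => (exp_pos _).le) (hA.integrable_exp_neg_mul_quadForm ht)
    _ = p₀ / √A.det * (π / t) ^ (Fintype.card ι / 2 : ℝ) := by
        rw [hA.integral_exp_neg_mul_quadForm ht]; ring

theorem norm_exp_neg_mul_le_one {t x : ℝ} (ht : 0 ≤ t) (hx : 0 ≤ x) :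
    ‖rexp (-t * x)‖ ≤ 1 := by
  rw [norm_eq_abs, abs_exp, exp_le_one_iff, neg_mul, neg_nonpos]
  exact mul_nonneg ht hx

theorem integral_integral_exp_neg_mul_le {Ω : Type*} [MeasurableSpace Ω] {μ : Measure Ω}
    [IsFiniteMeasure μ] {ν : Measure ℝ} [IsFiniteMeasure ν] (hν : ν (Set.Iic 0) = 0)
    {Z : Ω → ℝ} (hZ : Measurable Z) (hZ0 : ∀ ω, 0 ≤ Z ω) {g : ℝ → ℝ} (hg : Integrable g ν)
    (hbound : ∀ t, 0 < t → ∫ ω, rexp (-t * Z ω) ∂μ ≤ g t) :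
    ∫ ω, ∫ t, rexp (-t * Z ω) ∂ν ∂μ ≤ ∫ t, g t ∂ν := by
  have hpos : ∀ᵐ t ∂ν, 0 < t := by
    rw [ae_iff]; simp only [not_lt]; exact hν
  have hint : Integrable (Function.uncurry fun ω t => rexp (-t * Z ω)) (μ.prod ν) := by
    refine (integrable_const (1 : ℝ)).mono' ?_ ?_
    · exact (measurable_snd.neg.mul (hZ.comp measurable_fst)).exp.aestronglyMeasurable
    · filter_upwards [Measure.quasiMeasurePreserving_snd.ae hpos] with p hp
      exact norm_exp_neg_mul_le_one hp.le (hZ0 _)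
  rw [integral_integral_swap hint]
  exact integral_mono_ae hint.integral_prod_right hg (hpos.mono hbound)

/-- `V = W ⊕ W'` is modelled as a product of Euclidean spaces, `Σ` as `q = ‖L ·‖²`, and the
quotient form `Σ_{V/W}` on `W' ≅ V/W` as the matrix `A` via `hquot`. -/
theorem concentration_bound_completely_monotone_general
    {Ω : Type*} [MeasurableSpace Ω] (μ : Measure Ω) [IsProbabilityMeasure μ]
    (n m : ℕ)
    (ν : Measure ℝ) [IsFiniteMeasure ν] (hν : ν (Set.Iic 0) = 0)
    (𝒦 : ℝ → ℝ) (h𝒦 : ∀ r, 𝒦 r = ∫ t, Real.exp (-t * r) ∂ν)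
    (hνint : Integrable (fun t => (Real.pi / t) ^ ((m : ℝ) / 2)) ν)
    (dL : ℕ)
    (L : (EuclideanSpace ℝ (Fin n) × EuclideanSpace ℝ (Fin m)) →ₗ[ℝ]
      EuclideanSpace ℝ (Fin dL))
    (q : EuclideanSpace ℝ (Fin n) × EuclideanSpace ℝ (Fin m) → ℝ)
    (hq : ∀ x, q x = ‖L x‖ ^ 2)
    (A : Matrix (Fin m) (Fin m) ℝ) (hA : A.PosDef)
    (hquot : ∀ x' : EuclideanSpace ℝ (Fin m),
      (⨅ w : EuclideanSpace ℝ (Fin n), q (w, x')) = ∑ i, ∑ j, A i j * x' i * x' j)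
    (X X' : Ω → EuclideanSpace ℝ (Fin n) × EuclideanSpace ℝ (Fin m))
    (hX : Measurable X) (hX' : Measurable X')
    (hindep : IndepFun X X' μ)
    (p₀ : ℝ) (hp₀ : 0 < p₀)
    (hdensity : ∀ S : Set (EuclideanSpace ℝ (Fin m)), MeasurableSet S →
      μ.map (fun ω => (X ω).2) S ≤ ENNReal.ofReal p₀ * volume S) :
    ∫ ω, 𝒦 (q (X ω - X' ω)) ∂μ ≤
      (p₀ / Real.sqrt A.det) * ∫ t, (Real.pi / t) ^ ((m : ℝ) / 2) ∂ν := by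
  have hq0 : ∀ x, 0 ≤ q x := fun x => hq x ▸ sq_nonneg _
  have hq_meas : Measurable q := by
    rw [funext hq]; exact (L.continuous_of_finiteDimensional.norm.pow 2).measurable
  set B : EuclideanSpace ℝ (Fin m) → ℝ := fun y => ∑ i, ∑ j, A i j * y i * y j
  have hB0 : ∀ y, 0 ≤ B y := fun y =>
    (hquot y).le.trans' (le_ciInf fun _ => hq0 _)
  have hB_le : ∀ x, B x.2 ≤ q x := fun x =>
    (hquot x.2).ge.trans (ciInf_le ⟨0, Set.forall_mem_range.2 fun _ => hq0 _⟩ x.1)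
  have hbound : ∀ t, 0 < t → ∫ ω, rexp (-t * q (X ω - X' ω)) ∂μ ≤
      p₀ / √A.det * (π / t) ^ ((m : ℝ) / 2) := by
    intro t ht
    calc ∫ ω, rexp (-t * q (X ω - X' ω)) ∂μ
        ≤ ∫ ω, rexp (-t * B ((X ω).2 - (X' ω).2)) ∂μ := by
          refine integral_mono_of_nonneg (.of_forall fun _ => (exp_pos _).le) ?_
            (.of_forall fun ω => exp_le_exp.2 ?_)
          · exact .of_bound (by fun_prop) 1
              (.of_forall fun ω => norm_exp_neg_mul_le_one ht.le (hB0 _))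
          · exact mul_le_mul_of_nonpos_left (hB_le (X ω - X' ω)) (by linarith)
      _ ≤ p₀ / √A.det * (π / t) ^ ((m : ℝ) / 2) :=
          (hA.integral_exp_neg_mul_quadForm_sub_le hX.snd hX'.snd
            (hindep.comp measurable_snd measurable_snd) hp₀.le (Measure.le_iff.2 hdensity)
            ht).trans_eq (by rw [Fintype.card_fin])
  simp_rw [h𝒦]
  calc ∫ ω, ∫ t, rexp (-t * q (X ω - X' ω)) ∂ν ∂μ
      ≤ ∫ t, p₀ / √A.det * (π / t) ^ ((m : ℝ) / 2) ∂ν :=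
        integral_integral_exp_neg_mul_le hν (hq_meas.comp (hX.sub hX')) (fun _ => hq0 _)
          (hνint.const_mul _) hbound
    _ = p₀ / √A.det * ∫ t, (π / t) ^ ((m : ℝ) / 2) ∂ν := integral_const_mul _ _

/-- concentration bound for completely monotone kernels.  Model
`V = W ⊕ W'` as a product of Euclidean spaces (so `V/W ≅ W'`, of dimension `m`).
Let `Σ` be a positive semidefinite form `q(x) = ‖Lx‖²` on `V`, whose induced
quotient form on `V/W` — `x' ↦ inf_{w ∈ W} q(w, x')` — is given by the positive
definite matrix `A` (so `det Σ_{V/W} = det A`).  If the marginal density of `X` on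
`V/W` is bounded by `p₀` and `𝒦(r) = ∫₀^∞ e^{−tr} dν(t)` with `ν` a finite measure
on `(0,∞)`, then for an independent copy `X'` of `X`,
`E[𝒦(|X−X'|_Σ²)] ≤ (p₀/√det A) ∫₀^∞ (π/t)^{m/2} dν(t)`. -/
theorem concentration_bound_completely_monotone
    {Ω : Type*} [MeasurableSpace Ω] (μ : Measure Ω) [IsProbabilityMeasure μ]
    (n m : ℕ) (hm : 0 < m)
    (ν : Measure ℝ) [IsFiniteMeasure ν] (hν : ν (Set.Iic 0) = 0)
    (𝒦 : ℝ → ℝ) (h𝒦 : ∀ r, 𝒦 r = ∫ t, Real.exp (-t * r) ∂ν)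
    (hνint : Integrable (fun t => (Real.pi / t) ^ ((m : ℝ) / 2)) ν)
    (dL : ℕ)
    (L : (EuclideanSpace ℝ (Fin n) × EuclideanSpace ℝ (Fin m)) →ₗ[ℝ]
      EuclideanSpace ℝ (Fin dL))
    (q : EuclideanSpace ℝ (Fin n) × EuclideanSpace ℝ (Fin m) → ℝ)
    (hq : ∀ x, q x = ‖L x‖ ^ 2)
    (A : Matrix (Fin m) (Fin m) ℝ) (hA : A.PosDef)
    (hquot : ∀ x' : EuclideanSpace ℝ (Fin m),
      (⨅ w : EuclideanSpace ℝ (Fin n), q (w, x')) = ∑ i, ∑ j, A i j * x' i * x' j)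
    (X X' : Ω → EuclideanSpace ℝ (Fin n) × EuclideanSpace ℝ (Fin m))
    (hX : Measurable X) (hX' : Measurable X')
    (hindep : IndepFun X X' μ) (hid : IdentDistrib X X' μ μ)
    (p₀ : ℝ) (hp₀ : 0 < p₀)
    (hdensity : ∀ S : Set (EuclideanSpace ℝ (Fin m)), MeasurableSet S →
      μ.map (fun ω => (X ω).2) S ≤ ENNReal.ofReal p₀ * volume S) :
    ∫ ω, 𝒦 (q (X ω - X' ω)) ∂μ ≤
      (p₀ / Real.sqrt A.det) * ∫ t, (Real.pi / t) ^ ((m : ℝ) / 2) ∂ν :=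
  concentration_bound_completely_monotone_general μ n m ν hν 𝒦 h𝒦 hνint dL L q hq A hA hquot X X' hX
    hX' hindep p₀ hp₀ hdensity
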